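/- arXiv:0709.1296 — 7 statements merged into one kernel-verified Lean document; each statement's English description precedes it below -/
import Mathlib

section
/- Let K be a field and x₁,x₂,x₃ independent variables. Set s₁ = x₁+x₂+x₃, u = (x₁x₂² + x₂x₃² + x₃x₁² − 3x₁x₂x₃)/(x₁²+x₂²+x₃² − x₁x₂ − x₂x₃ − x₃x₁), and v = (x₁²x₂ + x₂²x₃ + x₃²x₁ − 3x₁x₂x₃)/(x₁²+x₂²+x₃² − x₁x₂ − x₂x₃ − x₃x₁). Then the second elementary symmetric function satisfies s₂ = s₁(u+v) − 3(u² − uv + v²). -/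
/-!
Write `u = A / D` and `v = B / D`. Multiplying through by `D²` turns the claim into the
polynomial identity `s₂ D² = s₁ (A + B) D - 3 (A² - A B + B²)`, and `D` is nonzero in the
function field because it specializes to `1` at `(1, 0, 0)`.
-/

open MvPolynomial IntermediateField

abbrev F3 (K : Type) [Field K] : Type := FractionRing (MvPolynomial (Fin 3) K)

noncomputable abbrev x3 (K : Type) [Field K] (i : Fin 3) : F3 K :=
  algebraMap (MvPolynomial (Fin 3) K) (F3 K) (X i)

noncomputable abbrev masudaU (K : Type) [Field K] : F3 K :=
  (x3 K 0 * x3 K 1 ^ 2 + x3 K 1 * x3 K 2 ^ 2 + x3 K 2 * x3 K 0 ^ 2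
    - 3 * (x3 K 0 * x3 K 1 * x3 K 2)) /
  (x3 K 0 ^ 2 + x3 K 1 ^ 2 + x3 K 2 ^ 2
    - x3 K 0 * x3 K 1 - x3 K 1 * x3 K 2 - x3 K 2 * x3 K 0)

noncomputable abbrev masudaV (K : Type) [Field K] : F3 K :=
  (x3 K 0 ^ 2 * x3 K 1 + x3 K 1 ^ 2 * x3 K 2 + x3 K 2 ^ 2 * x3 K 0
    - 3 * (x3 K 0 * x3 K 1 * x3 K 2)) /
  (x3 K 0 ^ 2 + x3 K 1 ^ 2 + x3 K 2 ^ 2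
    - x3 K 0 * x3 K 1 - x3 K 1 * x3 K 2 - x3 K 2 * x3 K 0)

theorem eq_sub_of_mul_sq_eq {F : Type*} [Field F] {p s a b d : F} (hd : d ≠ 0)
    (h : p * d ^ 2 = s * (a + b) * d - 3 * (a ^ 2 - a * b + b ^ 2)) :
    p = s * (a / d + b / d) - 3 * ((a / d) ^ 2 - a / d * (b / d) + (b / d) ^ 2) := by
  field_simp
  linear_combination h

theorem x3_sq_add_sq_add_sq_sub_ne_zero (K : Type) [Field K] :
    x3 K 0 ^ 2 + x3 K 1 ^ 2 + x3 K 2 ^ 2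
      - x3 K 0 * x3 K 1 - x3 K 1 * x3 K 2 - x3 K 2 * x3 K 0 ≠ 0 := by
  have hP : (X 0 ^ 2 + X 1 ^ 2 + X 2 ^ 2 - X 0 * X 1 - X 1 * X 2 - X 2 * X 0 :
      MvPolynomial (Fin 3) K) ≠ 0 := fun h => by
    simpa using congrArg (eval ![1, 0, 0]) h
  simpa using (IsFractionRing.injective (MvPolynomial (Fin 3) K) (F3 K)).ne hP

/-- s₂ = s₁(u+v) − 3(u² − uv + v²). -/
theorem stmt_1 (K : Type) [Field K] :
    x3 K 0 * x3 K 1 + x3 K 1 * x3 K 2 + x3 K 2 * x3 K 0 =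
      (x3 K 0 + x3 K 1 + x3 K 2) * (masudaU K + masudaV K)
        - 3 * (masudaU K ^ 2 - masudaU K * masudaV K + masudaV K ^ 2) :=
  eq_sub_of_mul_sq_eq (x3_sq_add_sq_add_sq_sub_ne_zero K) (by ring)
end

section
/- With s₁, u, v defined as above in K(x₁,x₂,x₃), the third elementary symmetric function satisfies s₃ = s₁·uv − (u³ + v³). -/
open MvPolynomial IntermediateField

/-!
Clearing the common denominator `D`, the identity becomes the polynomial identity
`s₃ D³ = s₁ Nᵤ N_v − (Nᵤ³ + N_v³)` between the numerators `Nᵤ = u D`, `N_v = v D`, which is checked by ring normalisation.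
It therefore holds in any field as soon as `D ≠ 0`, and `D` is a nonzero polynomial since
`D(1, 0, 0) = 1`.
-/

def cyclicQuad {R : Type*} [CommRing R] (x y z : R) : R :=
  x ^ 2 + y ^ 2 + z ^ 2 - x * y - y * z - z * x

theorem map_cyclicQuad {R S : Type*} [CommRing R] [CommRing S] (f : R →+* S) (x y z : R) :
    f (cyclicQuad x y z) = cyclicQuad (f x) (f y) (f z) := by
  simp only [cyclicQuad, map_sub, map_add, map_mul, map_pow]

section CyclicIdentity

variable {F : Type*} [Field F]

def cyclicU (x y z : F) : F :=
  (x * y ^ 2 + y * z ^ 2 + z * x ^ 2 - 3 * (x * y * z)) / cyclicQuad x y z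

def cyclicV (x y z : F) : F :=
  (x ^ 2 * y + y ^ 2 * z + z ^ 2 * x - 3 * (x * y * z)) / cyclicQuad x y z

theorem mul_mul_eq_add_mul_cyclicU_mul_cyclicV_sub {x y z : F} (hD : cyclicQuad x y z ≠ 0) :
    x * y * z = (x + y + z) * (cyclicU x y z * cyclicV x y z)
      - (cyclicU x y z ^ 3 + cyclicV x y z ^ 3) := by
  unfold cyclicU cyclicV
  field_simp
  unfold cyclicQuad
  ring

end CyclicIdentity

theorem cyclicQuad_x3_ne_zero (K : Type) [Field K] :
    cyclicQuad (x3 K 0) (x3 K 1) (x3 K 2) ≠ 0 := by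
  have hD : cyclicQuad (X 0 : MvPolynomial (Fin 3) K) (X 1) (X 2) ≠ 0 := fun h => by
    simpa [cyclicQuad] using congrArg (eval (Pi.single 0 1)) h
  rw [← map_cyclicQuad]
  exact (map_ne_zero_iff _ (IsFractionRing.injective _ _)).mpr hD

/-- s₃ = s₁·uv − (u³ + v³). -/
theorem stmt_2 (K : Type) [Field K] :
    x3 K 0 * x3 K 1 * x3 K 2 =
      (x3 K 0 + x3 K 1 + x3 K 2) * (masudaU K * masudaV K)
        - (masudaU K ^ 3 + masudaV K ^ 3) :=
  mul_mul_eq_add_mul_cyclicU_mul_cyclicV_sub (cyclicQuad_x3_ne_zero K)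
end

section
/- Let K be a field and σ the K-automorphism of K(x₁,x₂,x₃) with σ(x₁)=x₂, σ(x₂)=x₃, σ(x₃)=x₁. Then the fixed field K(x₁,x₂,x₃)^⟨σ⟩ equals K(s₁, u, v), where s₁ = x₁+x₂+x₃ and u, v are defined by u = (x₁x₂²+x₂x₃²+x₃x₁²−3x₁x₂x₃)/D, v = (x₁²x₂+x₂²x₃+x₃²x₁−3x₁x₂x₃)/D with D = x₁²+x₂²+x₃²−x₁x₂−x₂x₃−x₃x₁. In particular, the fixed field of the cyclic group of order 3 permuting three variables is purely transcendental over K. -/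
/-!
The elements `s = x₁ + x₂ + x₃`, `u`, `v` are invariant under the cyclic shift, so
`L = K(s, u, v)` lies in the fixed field `M`. Conversely `e₂ = s(u + v) - 3(u² - uv + v²)` and
`e₃ = s·uv - u³ - v³`, so `x₁` is a root of the cubic `X³ - sX² + e₂X - e₃` over `L`, while
`x₂ (v - u)` is a polynomial in `x₁` over `L` with `v - u = (x₁ - x₂)(x₂ - x₃)(x₁ - x₃)/D ≠ 0`.
Hence `K(x₁, x₂, x₃) = L(x₁)` has degree at most `3` over `L`, which by Artin's theorem is the
degree over `M ⊇ L`; so `L = M`.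
-/

open MvPolynomial IntermediateField

open Module

theorem IntermediateField.finiteDimensional_and_finrank_le_of_adjoin_simple_eq_top
    {F E : Type*} [Field F] [Field E] [Algebra F E] {a : E} (ha : F⟮a⟯ = ⊤) {p : Polynomial F}
    (hp : p.Monic) (hpa : Polynomial.aeval a p = 0) :
    FiniteDimensional F E ∧ finrank F E ≤ p.natDegree := by
  have hint : IsIntegral F a := ⟨p, hp, hpa⟩
  have e : F⟮a⟯ ≃ₗ[F] E := ((equivOfEq ha).trans topEquiv).toLinearEquiv
  have := adjoin.finiteDimensional hint
  refine ⟨e.finiteDimensional, ?_⟩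
  rw [← e.finrank_eq, adjoin.finrank hint]
  exact Polynomial.natDegree_le_natDegree (minpoly.min F a hp hpa)

theorem exists_monic_cubic_aeval_eq_zero {F E : Type*} [Field F] [CommRing E] [Algebra F E]
    {a b c : E} (h₁ : a + b + c ∈ (algebraMap F E).range)
    (h₂ : a * b + b * c + c * a ∈ (algebraMap F E).range)
    (h₃ : a * b * c ∈ (algebraMap F E).range) :
    ∃ p : Polynomial F, p.Monic ∧ p.natDegree = 3 ∧ Polynomial.aeval a p = 0 := by
  obtain ⟨s₁, hs₁⟩ := h₁
  obtain ⟨s₂, hs₂⟩ := h₂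
  obtain ⟨s₃, hs₃⟩ := h₃
  refine ⟨.X ^ 3 - .C s₁ * .X ^ 2 + .C s₂ * .X - .C s₃, by monicity!, by compute_degree!, ?_⟩
  simp only [map_sub, map_add, map_mul, map_pow, Polynomial.aeval_X, Polynomial.aeval_C,
    hs₁, hs₂, hs₃]
  ring

theorem IntermediateField.mem_fixedField_zpowers_iff {F E : Type*} [Field F] [Field E]
    [Algebra F E] {σ : E ≃ₐ[F] E} {x : E} :
    x ∈ fixedField (Subgroup.zpowers σ) ↔ σ x = x := by
  rw [mem_fixedField_iff, Subgroup.forall_mem_zpowers]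
  exact MulAction.mem_fixedBy_zpowers_iff_mem_fixedBy (g := σ)

theorem IntermediateField.finrank_fixedField_eq_nat_card {F E : Type*} [Field F] [Field E]
    [Algebra F E] (H : Subgroup (E ≃ₐ[F] E)) [Finite H] :
    finrank (fixedField H) E = Nat.card H := by
  have := Fintype.ofFinite H
  rw [Nat.card_eq_fintype_card]
  exact FixedPoints.finrank_eq_card H E

section RationalFunctionField

variable {ι K : Type*} [Field K]

theorem MvPolynomial.fractionRing_adjoin_range_X_eq_top :
    adjoin K (Set.range (algebraMap (MvPolynomial ι K) (FractionRing (MvPolynomial ι K)) ∘ X)) =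
      ⊤ := by
  set T :=
    adjoin K (Set.range (algebraMap (MvPolynomial ι K) (FractionRing (MvPolynomial ι K)) ∘ X))
  have hpoly (p : MvPolynomial ι K) : algebraMap _ (FractionRing (MvPolynomial ι K)) p ∈ T := by
    induction p using MvPolynomial.induction_on with
    | C r =>
      rw [← MvPolynomial.algebraMap_eq, ← IsScalarTower.algebraMap_apply]
      exact T.algebraMap_mem r
    | add p q hp hq => simpa using add_mem hp hq
    | mul_X p i hp => simpa using mul_mem hp (subset_adjoin K _ ⟨i, rfl⟩)
  refine eq_top_iff.2 fun z _ ↦ ?_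
  obtain ⟨p, q, -, rfl⟩ := IsFractionRing.div_surjective (A := MvPolynomial ι K) z
  exact div_mem (hpoly p) (hpoly q)

theorem MvPolynomial.fractionRing_algHom_ext {L : Type*} [Field L] [Algebra K L]
    {φ ψ : FractionRing (MvPolynomial ι K) →ₐ[K] L}
    (h : ∀ i, φ (algebraMap (MvPolynomial ι K) _ (X i)) =
      ψ (algebraMap (MvPolynomial ι K) _ (X i))) :
    φ = ψ := by
  have hpoly : φ.comp (IsScalarTower.toAlgHom K _ _) = ψ.comp (IsScalarTower.toAlgHom K _ _) :=
    MvPolynomial.algHom_ext h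
  exact AlgHom.coe_ringHom_injective <|
    IsFractionRing.ringHom_ext (A := MvPolynomial ι K) (AlgHom.congr_fun hpoly)

end RationalFunctionField

namespace Masuda

section Algebra

variable {R : Type*} [CommRing R]

def den (a b c : R) : R := a ^ 2 + b ^ 2 + c ^ 2 - a * b - b * c - c * a

theorem map_den {S F : Type*} [CommRing S] [FunLike F R S] [RingHomClass F R S] (f : F)
    (a b c : R) : f (den a b c) = den (f a) (f b) (f c) := by
  simp [den]

variable {E : Type*} [Field E]

def u (a b c : E) : E := (a * b ^ 2 + b * c ^ 2 + c * a ^ 2 - 3 * (a * b * c)) / den a b c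

def v (a b c : E) : E := (a ^ 2 * b + b ^ 2 * c + c ^ 2 * a - 3 * (a * b * c)) / den a b c

section Map

variable {E' F : Type*} [Field E'] [FunLike F E E'] [RingHomClass F E E'] (f : F) (a b c : E)

theorem map_u : f (u a b c) = u (f a) (f b) (f c) := by
  simp [u, map_den, map_ofNat]

theorem map_v : f (v a b c) = v (f a) (f b) (f c) := by
  simp [v, map_den, map_ofNat]

end Map

theorem u_rotate (a b c : E) : u b c a = u a b c := by
  simp only [u, den]; ring

theorem v_rotate (a b c : E) : v b c a = v a b c := by
  simp only [v, den]; ring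

variable {a b c : E} (hD : den a b c ≠ 0)
include hD

theorem v_sub_u_ne_zero (hab : a ≠ b) (hbc : b ≠ c) (hac : a ≠ c) : v a b c - u a b c ≠ 0 := by
  have h : v a b c - u a b c = (a - b) * (b - c) * (a - c) / den a b c := by
    simp only [u, v]; field_simp; ring
  rw [h]
  exact div_ne_zero (mul_ne_zero (mul_ne_zero (sub_ne_zero.2 hab) (sub_ne_zero.2 hbc))
    (sub_ne_zero.2 hac)) hD

theorem esymm_two_eq :
    a * b + b * c + c * a =
      (a + b + c) * (u a b c + v a b c) - 3 * (u a b c ^ 2 - u a b c * v a b c + v a b c ^ 2) := by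
  simp only [u, v]; field_simp; simp only [den]; ring

theorem esymm_three_eq :
    a * b * c = (a + b + c) * (u a b c * v a b c) - (u a b c ^ 3 + v a b c ^ 3) := by
  simp only [u, v]; field_simp; simp only [den]; ring

theorem mul_v_sub_u :
    b * (v a b c - u a b c) = a ^ 2 + (u a b c - (a + b + c)) * a + (a + b + c) * v a b c
      - 2 * (u a b c ^ 2 - u a b c * v a b c + v a b c ^ 2) := by
  simp only [u, v]; field_simp; simp only [den]; ring

end Algebra

section FieldTheory

variable {K E : Type*} [Field K] [Field E] [Algebra K E] {a b c : E} {T : IntermediateField K E}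

theorem esymm_two_mem (hD : den a b c ≠ 0) (hs : a + b + c ∈ T) (hu : u a b c ∈ T)
    (hv : v a b c ∈ T) : a * b + b * c + c * a ∈ T := by
  rw [esymm_two_eq hD]
  apply_rules [add_mem, sub_mem, mul_mem, pow_mem, IntermediateField.natCast_mem]

theorem esymm_three_mem (hD : den a b c ≠ 0) (hs : a + b + c ∈ T) (hu : u a b c ∈ T)
    (hv : v a b c ∈ T) : a * b * c ∈ T := by
  rw [esymm_three_eq hD]
  apply_rules [add_mem, sub_mem, mul_mem, pow_mem]

theorem snd_mem_of_fst_mem (hD : den a b c ≠ 0) (hab : a ≠ b) (hbc : b ≠ c) (hac : a ≠ c)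
    (hs : a + b + c ∈ T) (hu : u a b c ∈ T) (hv : v a b c ∈ T) (ha : a ∈ T) : b ∈ T := by
  rw [← mul_div_cancel_right₀ b (v_sub_u_ne_zero hD hab hbc hac), mul_v_sub_u hD]
  apply_rules [add_mem, sub_mem, mul_mem, pow_mem, div_mem, IntermediateField.natCast_mem]

theorem finiteDimensional_and_finrank_le_three {L : IntermediateField K E} (hD : den a b c ≠ 0)
    (hab : a ≠ b) (hbc : b ≠ c) (hac : a ≠ c) (htop : adjoin K {a, b, c} = ⊤)
    (hs : a + b + c ∈ L) (hu : u a b c ∈ L) (hv : v a b c ∈ L) :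
    FiniteDimensional L E ∧ finrank L E ≤ 3 := by
  have hrange (x : E) (hx : x ∈ L) : x ∈ (algebraMap L E).range := ⟨⟨x, hx⟩, rfl⟩
  obtain ⟨p, hp, hpdeg, hpa⟩ := exists_monic_cubic_aeval_eq_zero (hrange _ hs)
    (hrange _ (esymm_two_mem hD hs hu hv)) (hrange _ (esymm_three_mem hD hs hu hv))
  have hgen : L⟮a⟯ = ⊤ := by
    set T := (L⟮a⟯).restrictScalars K
    have hLT (x : E) (hx : x ∈ L) : x ∈ T := (L⟮a⟯).algebraMap_mem ⟨x, hx⟩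
    have ha : a ∈ T := mem_adjoin_simple_self L a
    have hb : b ∈ T := snd_mem_of_fst_mem hD hab hbc hac (hLT _ hs) (hLT _ hu) (hLT _ hv) ha
    have hc : c ∈ T := by
      rw [show c = a + b + c - a - b by ring]
      exact sub_mem (sub_mem (hLT _ hs) ha) hb
    rw [← restrictScalars_eq_top_iff (K := K), eq_top_iff, ← htop, adjoin_le_iff]
    rintro x (rfl | rfl | rfl) <;> assumption
  exact hpdeg ▸ finiteDimensional_and_finrank_le_of_adjoin_simple_eq_top hgen hp hpa

end FieldTheory

end Masuda

theorem x3_injective (K : Type) [Field K] : Function.Injective (x3 K) :=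
  (IsFractionRing.injective (MvPolynomial (Fin 3) K) (F3 K)).comp X_injective

theorem adjoin_x3_eq_top (K : Type) [Field K] : adjoin K {x3 K 0, x3 K 1, x3 K 2} = ⊤ := by
  rw [← fractionRing_adjoin_range_X_eq_top]
  congr 1
  ext; simp [Fin.exists_fin_succ, eq_comm]

theorem Masuda.den_x3_ne_zero (K : Type) [Field K] : den (x3 K 0) (x3 K 1) (x3 K 2) ≠ 0 := by
  rw [← map_den, ne_eq, map_eq_zero_iff _ (IsFractionRing.injective _ _)]
  intro h
  simpa [den] using congrArg (eval ![1, 0, 0]) h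

theorem masudaU_eq (K : Type) [Field K] : masudaU K = Masuda.u (x3 K 0) (x3 K 1) (x3 K 2) := rfl

theorem masudaV_eq (K : Type) [Field K] : masudaV K = Masuda.v (x3 K 0) (x3 K 1) (x3 K 2) := rfl

/-- Masuda: the fixed field of the 3-cycle σ is K(s₁, u, v);
in particular it is purely transcendental over K. -/
theorem stmt_4 (K : Type) [Field K] (σ : F3 K ≃ₐ[K] F3 K)
    (hσ0 : σ (x3 K 0) = x3 K 1) (hσ1 : σ (x3 K 1) = x3 K 2)
    (hσ2 : σ (x3 K 2) = x3 K 0) :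
    fixedField (Subgroup.zpowers σ) =
      adjoin K {x3 K 0 + x3 K 1 + x3 K 2, masudaU K, masudaV K} := by
  rw [masudaU_eq, masudaV_eq]
  set L := adjoin K {x3 K 0 + x3 K 1 + x3 K 2, Masuda.u (x3 K 0) (x3 K 1) (x3 K 2),
    Masuda.v (x3 K 0) (x3 K 1) (x3 K 2)}
  have hLM : L ≤ fixedField (Subgroup.zpowers σ) := by
    simp only [L, adjoin_le_iff, Set.insert_subset_iff, Set.singleton_subset_iff,
      SetLike.mem_coe, mem_fixedField_zpowers_iff, Masuda.map_u, Masuda.map_v, map_add, hσ0,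
      hσ1, hσ2, Masuda.u_rotate, Masuda.v_rotate]
    exact ⟨by ring, trivial, trivial⟩
  have hσ3 : σ ^ 3 = 1 := AlgEquiv.coe_toAlgHom_injective <| fractionRing_algHom_ext fun i ↦ by
    fin_cases i <;> simp [pow_succ, hσ0, hσ1, hσ2]
  have hσ_ne : σ ≠ 1 := fun h ↦
    (x3_injective K).ne (by decide : (0 : Fin 3) ≠ 1) (by simpa [h] using hσ0.symm)
  have : Finite (Subgroup.zpowers σ) :=
    (isOfFinOrder_iff_pow_eq_one.2 ⟨3, by norm_num, hσ3⟩).finite_zpowers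
  have hM : finrank (fixedField (Subgroup.zpowers σ)) (F3 K) = 3 := by
    rw [finrank_fixedField_eq_nat_card, Nat.card_zpowers, orderOf_eq_prime hσ3 hσ_ne]
  obtain ⟨_, hL⟩ := Masuda.finiteDimensional_and_finrank_le_three (L := L)
    (Masuda.den_x3_ne_zero K) ((x3_injective K).ne (by decide)) ((x3_injective K).ne (by decide))
    ((x3_injective K).ne (by decide)) (adjoin_x3_eq_top K) (subset_adjoin _ _ (by simp))
    (subset_adjoin _ _ (by simp)) (subset_adjoin _ _ (by simp))
  exact (eq_of_le_of_finrank_le' hLM (hL.trans hM.ge)).symm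
end

section
/- Let K be a field, a ∈ K \ {0}, and let τ be the K-automorphism of K(x₁,x₂,x₃) given by τ(x₁) = a/x₂, τ(x₂) = a/x₁, τ(x₃) = a/x₃. Then with u, v as in Masuda's theorem, τ(u) = a·u/(u² − uv + v²) and τ(v) = a·v/(u² − uv + v²); in particular τ fixes the ratio w = u/v. -/
/-! Writing `u = N_u / D`, `v = N_v / D`, the substitution `τ` multiplies the cubics `N_u`, `N_v`
by `a³ / (x₁x₂x₃)²` and sends `D` to `a² M / (x₁x₂x₃)²`, where
`M = x₁²x₂² + x₂²x₃² + x₃²x₁² - x₁x₂x₃(x₁ + x₂ + x₃)`. Hence `τ u = a N_u / M` and `τ v = a N_v / M`,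
and the polynomial identity `N_u² - N_u N_v + N_v² = D M` says `u² - uv + v² = M / D`. -/

open MvPolynomial IntermediateField

section CommRing

variable {R S : Type*} [CommRing R] [CommRing S]

def masudaNumU (x y z : R) : R := x * y ^ 2 + y * z ^ 2 + z * x ^ 2 - 3 * (x * y * z)

def masudaNumV (x y z : R) : R := x ^ 2 * y + y ^ 2 * z + z ^ 2 * x - 3 * (x * y * z)

def masudaDen (x y z : R) : R := x ^ 2 + y ^ 2 + z ^ 2 - x * y - y * z - z * x

/-- `x²y²z² · masudaDen x⁻¹ y⁻¹ z⁻¹`. -/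
def masudaDenDual (x y z : R) : R :=
  x ^ 2 * y ^ 2 + y ^ 2 * z ^ 2 + z ^ 2 * x ^ 2 - x * y * z * (x + y + z)

theorem masudaNumU_sq_sub_mul_add_sq (x y z : R) :
    masudaNumU x y z ^ 2 - masudaNumU x y z * masudaNumV x y z + masudaNumV x y z ^ 2 =
      masudaDen x y z * masudaDenDual x y z := by
  unfold masudaNumU masudaNumV masudaDen masudaDenDual
  ring

variable {G : Type*} [FunLike G R S] [RingHomClass G R S] (f : G) (x y z : R)

theorem map_masudaNumU : f (masudaNumU x y z) = masudaNumU (f x) (f y) (f z) := by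
  simp only [masudaNumU, map_sub, map_add, map_mul, map_pow, map_ofNat]

theorem map_masudaNumV : f (masudaNumV x y z) = masudaNumV (f x) (f y) (f z) := by
  simp only [masudaNumV, map_sub, map_add, map_mul, map_pow, map_ofNat]

theorem map_masudaDen : f (masudaDen x y z) = masudaDen (f x) (f y) (f z) := by
  simp only [masudaDen, map_sub, map_add, map_mul, map_pow]

theorem map_masudaDenDual : f (masudaDenDual x y z) = masudaDenDual (f x) (f y) (f z) := by
  simp only [masudaDenDual, map_sub, map_add, map_mul, map_pow]

end CommRing


section Field

variable {F : Type*} [Field F] {a x y z : F}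

theorem masudaNumU_twist (hx : x ≠ 0) (hy : y ≠ 0) (hz : z ≠ 0) :
    masudaNumU (a / y) (a / x) (a / z) = a ^ 3 * masudaNumU x y z / (x * y * z) ^ 2 := by
  unfold masudaNumU
  field_simp
  ring

theorem masudaNumV_twist (hx : x ≠ 0) (hy : y ≠ 0) (hz : z ≠ 0) :
    masudaNumV (a / y) (a / x) (a / z) = a ^ 3 * masudaNumV x y z / (x * y * z) ^ 2 := by
  unfold masudaNumV
  field_simp
  ring

theorem masudaDen_twist (hx : x ≠ 0) (hy : y ≠ 0) (hz : z ≠ 0) :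
    masudaDen (a / y) (a / x) (a / z) = a ^ 2 * masudaDenDual x y z / (x * y * z) ^ 2 := by
  unfold masudaDen masudaDenDual
  field_simp
  ring

theorem masuda_quadratic (hD : masudaDen x y z ≠ 0) :
    (masudaNumU x y z / masudaDen x y z) ^ 2
        - masudaNumU x y z / masudaDen x y z * (masudaNumV x y z / masudaDen x y z)
        + (masudaNumV x y z / masudaDen x y z) ^ 2 =
      masudaDenDual x y z / masudaDen x y z := by
  field_simp
  linear_combination masudaNumU_sq_sub_mul_add_sq x y z

theorem div_masudaDen_twist {n n' : F} (hn : n' = a ^ 3 * n / (x * y * z) ^ 2)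
    (ha : a ≠ 0) (hx : x ≠ 0) (hy : y ≠ 0) (hz : z ≠ 0) (hD : masudaDen x y z ≠ 0) :
    n' / masudaDen (a / y) (a / x) (a / z) =
      a * (n / masudaDen x y z) /
        ((masudaNumU x y z / masudaDen x y z) ^ 2
          - masudaNumU x y z / masudaDen x y z * (masudaNumV x y z / masudaDen x y z)
          + (masudaNumV x y z / masudaDen x y z) ^ 2) := by
  rw [masuda_quadratic hD, hn, masudaDen_twist hx hy hz]
  field_simp

end Field

theorem algebraMap_fractionRing_ne_zero {σ K : Type*} [Field K] {p : MvPolynomial σ K}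
    (c : σ → K) (h : eval c p ≠ 0) :
    algebraMap (MvPolynomial σ K) (FractionRing (MvPolynomial σ K)) p ≠ 0 :=
  (map_ne_zero_iff _ (IsFractionRing.injective _ _)).2 fun hp ↦ h (by rw [hp, map_zero])

section F3

variable (K : Type) [Field K]

theorem x3_ne_zero (i : Fin 3) : x3 K i ≠ 0 :=
  algebraMap_fractionRing_ne_zero (fun _ ↦ 1) (by simp)

theorem masudaDen_x3_ne_zero : masudaDen (x3 K 0) (x3 K 1) (x3 K 2) ≠ 0 := by
  rw [← map_masudaDen]
  exact algebraMap_fractionRing_ne_zero ![1, 0, 0] (by simp [masudaDen])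

theorem masudaDenDual_x3_ne_zero : masudaDenDual (x3 K 0) (x3 K 1) (x3 K 2) ≠ 0 := by
  rw [← map_masudaDenDual]
  exact algebraMap_fractionRing_ne_zero ![1, 1, 0] (by simp [masudaDenDual])

theorem masudaU_eq_s5 : masudaU K =
    masudaNumU (x3 K 0) (x3 K 1) (x3 K 2) / masudaDen (x3 K 0) (x3 K 1) (x3 K 2) := rfl

theorem masudaV_eq_s5 : masudaV K =
    masudaNumV (x3 K 0) (x3 K 1) (x3 K 2) / masudaDen (x3 K 0) (x3 K 1) (x3 K 2) := rfl

end F3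

/-- for τ: x₁↦a/x₂, x₂↦a/x₁, x₃↦a/x₃ one has
τ(u) = au/(u²−uv+v²), τ(v) = av/(u²−uv+v²), and τ fixes w = u/v. -/
theorem stmt_5 (K : Type) [Field K] (a : K) (ha : a ≠ 0)
    (τ : F3 K ≃ₐ[K] F3 K)
    (hτ0 : τ (x3 K 0) = algebraMap K (F3 K) a / x3 K 1)
    (hτ1 : τ (x3 K 1) = algebraMap K (F3 K) a / x3 K 0)
    (hτ2 : τ (x3 K 2) = algebraMap K (F3 K) a / x3 K 2) :
    τ (masudaU K) = algebraMap K (F3 K) a * masudaU K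
        / (masudaU K ^ 2 - masudaU K * masudaV K + masudaV K ^ 2) ∧
    τ (masudaV K) = algebraMap K (F3 K) a * masudaV K
        / (masudaU K ^ 2 - masudaU K * masudaV K + masudaV K ^ 2) ∧
    τ (masudaU K / masudaV K) = masudaU K / masudaV K := by
  have hA : algebraMap K (F3 K) a ≠ 0 := (map_ne_zero _).2 ha
  have h0 := x3_ne_zero K 0
  have h1 := x3_ne_zero K 1
  have h2 := x3_ne_zero K 2
  have hD := masudaDen_x3_ne_zero K
  have hS : masudaU K ^ 2 - masudaU K * masudaV K + masudaV K ^ 2 ≠ 0 := by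
    rw [masudaU_eq_s5, masudaV_eq_s5, masuda_quadratic hD]
    exact div_ne_zero (masudaDenDual_x3_ne_zero K) hD
  have hu : τ (masudaU K) = algebraMap K (F3 K) a * masudaU K
      / (masudaU K ^ 2 - masudaU K * masudaV K + masudaV K ^ 2) := by
    rw [masudaU_eq_s5, masudaV_eq_s5, map_div₀, map_masudaNumU, map_masudaDen, hτ0, hτ1, hτ2]
    exact div_masudaDen_twist (masudaNumU_twist h0 h1 h2) hA h0 h1 h2 hD
  have hv : τ (masudaV K) = algebraMap K (F3 K) a * masudaV K
      / (masudaU K ^ 2 - masudaU K * masudaV K + masudaV K ^ 2) := by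
    rw [masudaU_eq_s5, masudaV_eq_s5, map_div₀, map_masudaNumV, map_masudaDen, hτ0, hτ1, hτ2]
    exact div_masudaDen_twist (masudaNumV_twist h0 h1 h2) hA h0 h1 h2 hD
  refine ⟨hu, hv, ?_⟩
  rw [map_div₀, hu, hv, div_div_div_cancel_right₀ hS, mul_div_mul_left _ _ hA]
end

section
/- Let K be a field, x₁,x₂,x₃,x₄ independent variables, s₁ = Σxᵢ, and S = (x₁+x₂−x₃−x₄)/(x₁x₂−x₃x₄), T = (x₁−x₂−x₃+x₄)/(x₁x₄−x₂x₃), U = (x₁−x₂+x₃−x₄)/(x₁x₃−x₂x₄). Then with u₁ = S+T+U, u₂ = ST+TU+SU, u₃ = STU, the element x₄ satisfies the degree-4 polynomial equation u₁² − 4u₂ + s₁u₃ + (8 − s₁u₁)u₃x₄ − (2u₁ − s₁u₂)u₃x₄² − s₁u₃²x₄³ + u₃²x₄⁴ = 0 over K(s₁, S, T, U). -/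
open MvPolynomial IntermediateField

abbrev F4 (K : Type) [Field K] : Type := FractionRing (MvPolynomial (Fin 4) K)

noncomputable abbrev x4 (K : Type) [Field K] (i : Fin 4) : F4 K :=
  algebraMap (MvPolynomial (Fin 4) K) (F4 K) (X i)

noncomputable abbrev sQ (K : Type) [Field K] : F4 K :=
  (x4 K 0 + x4 K 1 - x4 K 2 - x4 K 3) / (x4 K 0 * x4 K 1 - x4 K 2 * x4 K 3)

noncomputable abbrev tQ (K : Type) [Field K] : F4 K :=
  (x4 K 0 - x4 K 1 - x4 K 2 + x4 K 3) / (x4 K 0 * x4 K 3 - x4 K 1 * x4 K 2)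

noncomputable abbrev uQ (K : Type) [Field K] : F4 K :=
  (x4 K 0 - x4 K 1 + x4 K 2 - x4 K 3) / (x4 K 0 * x4 K 2 - x4 K 1 * x4 K 3)

noncomputable abbrev s1Q (K : Type) [Field K] : F4 K :=
  x4 K 0 + x4 K 1 + x4 K 2 + x4 K 3

noncomputable abbrev u1Q (K : Type) [Field K] : F4 K := sQ K + tQ K + uQ K
noncomputable abbrev u2Q (K : Type) [Field K] : F4 K :=
  sQ K * tQ K + tQ K * uQ K + sQ K * uQ K
noncomputable abbrev u3Q (K : Type) [Field K] : F4 K := sQ K * tQ K * uQ K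

/-! Once the three denominators `x₁x₂ - x₃x₄`, `x₁x₄ - x₂x₃`, `x₁x₃ - x₂x₄` are nonzero, the
identity becomes a polynomial identity after clearing them, so it holds in every field. In
`K(x₁, x₂, x₃, x₄)` a denominator `xᵢxⱼ - xₖxₗ` is nonzero because it takes the value `1` where
`xₖ = 0` and all other variables equal `1`. -/

theorem MvPolynomial.X_mul_X_sub_X_mul_X_ne_zero {σ R : Type*} [CommRing R] [Nontrivial R]
    [DecidableEq σ] {i j k l : σ} (hki : k ≠ i) (hkj : k ≠ j) :
    (X i * X j - X k * X l : MvPolynomial σ R) ≠ 0 := by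
  intro h
  simpa [hki.symm, hkj.symm] using congrArg (eval fun m => if m = k then 0 else 1) h

theorem quartic_relation_of_eq_div {F : Type*} [Field F] {x₁ x₂ x₃ x₄ S T U : F}
    (hA : x₁ * x₂ - x₃ * x₄ ≠ 0) (hB : x₁ * x₄ - x₂ * x₃ ≠ 0) (hC : x₁ * x₃ - x₂ * x₄ ≠ 0)
    (hS : S = (x₁ + x₂ - x₃ - x₄) / (x₁ * x₂ - x₃ * x₄))
    (hT : T = (x₁ - x₂ - x₃ + x₄) / (x₁ * x₄ - x₂ * x₃))
    (hU : U = (x₁ - x₂ + x₃ - x₄) / (x₁ * x₃ - x₂ * x₄)) :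
    (S + T + U) ^ 2 - 4 * (S * T + T * U + S * U) + (x₁ + x₂ + x₃ + x₄) * (S * T * U)
      + (8 - (x₁ + x₂ + x₃ + x₄) * (S + T + U)) * (S * T * U) * x₄
      - (2 * (S + T + U) - (x₁ + x₂ + x₃ + x₄) * (S * T + T * U + S * U)) * (S * T * U) * x₄ ^ 2
      - (x₁ + x₂ + x₃ + x₄) * (S * T * U) ^ 2 * x₄ ^ 3
      + (S * T * U) ^ 2 * x₄ ^ 4 = 0 := by
  subst hS hT hU
  field_simp
  ring

/-- x₄ satisfies the degree-4 equation
u₁² − 4u₂ + s₁u₃ + (8 − s₁u₁)u₃x₄ − (2u₁ − s₁u₂)u₃x₄² − s₁u₃²x₄³ + u₃²x₄⁴ = 0. -/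
theorem stmt_7 (K : Type) [Field K] :
    u1Q K ^ 2 - 4 * u2Q K + s1Q K * u3Q K
      + (8 - s1Q K * u1Q K) * u3Q K * x4 K 3
      - (2 * u1Q K - s1Q K * u2Q K) * u3Q K * x4 K 3 ^ 2
      - s1Q K * u3Q K ^ 2 * x4 K 3 ^ 3
      + u3Q K ^ 2 * x4 K 3 ^ 4 = 0 := by
  have hden : ∀ {i j k l : Fin 4}, k ≠ i → k ≠ j → x4 K i * x4 K j - x4 K k * x4 K l ≠ 0 := by
    intro i j k l hki hkj
    simp only [x4, ← map_mul, ← map_sub]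
    exact (map_ne_zero_iff _ (IsFractionRing.injective _ _)).mpr
      (X_mul_X_sub_X_mul_X_ne_zero hki hkj)
  exact quartic_relation_of_eq_div (hden (by decide) (by decide))
    (hden (by decide) (by decide)) (hden (by decide) (by decide)) rfl rfl rfl
end

section
/- Let K be a field and V₄ = ⟨(12)(34), (13)(24)⟩ ⊂ S₄ act on K(x₁,x₂,x₃,x₄) by permuting the variables. Then K(x₁,x₂,x₃,x₄)^{V₄} = K(s₁, S, T, U), where s₁ = x₁+x₂+x₃+x₄, S = (x₁+x₂−x₃−x₄)/(x₁x₂−x₃x₄), T = (x₁−x₂−x₃+x₄)/(x₁x₄−x₂x₃), U = (x₁−x₂+x₃−x₄)/(x₁x₃−x₂x₄). In particular the fixed field of the Klein four-group acting by permutations on four variables is purely transcendental over K. -/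
open MvPolynomial IntermediateField

/-!
Every generator of V₄ fixes s₁, S, T and U, so L = K(s₁, S, T, U) lies in the fixed field, whose
index in K(x₁, x₂, x₃, x₄) is |V₄| = 4 by Artin's theorem. It remains to see that K(x₁, …, x₄) is
reached from L by two successive extensions of degree at most 2.

Let a, b, c be the numerators of S, U, T. The identities s₁ a − 4(x₁x₂ − x₃x₄) = bc and its two
analogues give s₁ − 4/S = bc/a, s₁ − 4/U = ca/b, s₁ − 4/T = ab/c. Hence a² and b² lie in L,
c = (bc/a)(ca/b)(ab/c)/(ab) lies in L(a, b), and if 2 ≠ 0 so do the xᵢ = (s₁ ± a ± b ± c)/4.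
If 2 = 0, then a = b = c = s₁, so the denominators of S, T, U lie in L; now y = x₁ + x₂ is a root
of X² − s₁X + (x₁x₄ − x₂x₃) + (x₁x₃ − x₂x₄), x₁x₂ lies in L(y), and x₃, x₄ are recovered from x₁,
x₂ and the denominators of T and U.
-/

open Module

section FieldTheory

variable {K E : Type*} [Field K] [Field E] [Algebra K E]

theorem IntermediateField.isIntegral_and_finrank_adjoin_le_two (L : IntermediateField K E)
    {z p q : E} (hp : p ∈ L) (hq : q ∈ L) (h : z ^ 2 + p * z + q = 0) :
    IsIntegral L z ∧ finrank L L⟮z⟯ ≤ 2 := by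
  set P : Polynomial L := .X ^ 2 + (.C ⟨p, hp⟩ * .X + .C ⟨q, hq⟩)
  have hP : P.Monic := Polynomial.monic_X_pow_add Polynomial.degree_linear_lt
  have hPz : Polynomial.aeval z P = 0 := by simpa [P, add_assoc] using h
  have hz : IsIntegral L z := ⟨P, hP, hPz⟩
  refine ⟨hz, ?_⟩
  rw [adjoin.finrank hz]
  refine Polynomial.natDegree_le_of_degree_le ((minpoly.min L z hP hPz).trans ?_)
  rw [Polynomial.degree_add_eq_left_of_degree_lt] <;> simp [Polynomial.degree_linear_lt]

theorem IntermediateField.finrank_le_four_of_quadratic_tower (L : IntermediateField K E)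
    {z₁ z₂ p₁ q₁ p₂ q₂ : E}
    (hp₁ : p₁ ∈ L) (hq₁ : q₁ ∈ L) (h₁ : z₁ ^ 2 + p₁ * z₁ + q₁ = 0)
    (hp₂ : p₂ ∈ L⟮z₁⟯) (hq₂ : q₂ ∈ L⟮z₁⟯) (h₂ : z₂ ^ 2 + p₂ * z₂ + q₂ = 0)
    (htop : L⟮z₁, z₂⟯ = ⊤) : FiniteDimensional L E ∧ finrank L E ≤ 4 := by
  obtain ⟨hz₁, hdeg₁⟩ := isIntegral_and_finrank_adjoin_le_two L hp₁ hq₁ h₁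
  obtain ⟨hz₂, hdeg₂⟩ := isIntegral_and_finrank_adjoin_le_two L⟮z₁⟯ hp₂ hq₂ h₂
  have htop₂ : L⟮z₁⟯⟮z₂⟯ = ⊤ := by
    apply restrictScalars_injective L
    rw [restrictScalars_top, adjoin_adjoin_left, Set.singleton_union]
    exact htop
  have : FiniteDimensional L L⟮z₁⟯ := adjoin.finiteDimensional hz₁
  have : FiniteDimensional L⟮z₁⟯ E := by
    have := adjoin.finiteDimensional hz₂
    rw [htop₂] at this
    exact topEquiv.toLinearEquiv.finiteDimensional
  refine ⟨FiniteDimensional.trans L L⟮z₁⟯ E, ?_⟩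
  rw [htop₂, finrank_top'] at hdeg₂
  have : Module.Free L L⟮z₁⟯ := .of_divisionRing _ _
  have : Module.Free L⟮z₁⟯ E := .of_divisionRing _ _
  calc finrank L E = finrank L L⟮z₁⟯ * finrank L⟮z₁⟯ E :=
      (finrank_mul_finrank L L⟮z₁⟯ E).symm
    _ ≤ 2 * 2 := Nat.mul_le_mul hdeg₁ hdeg₂

theorem IntermediateField.mem_fixedField_closure_iff {S : Set (E ≃ₐ[K] E)} {z : E} :
    z ∈ fixedField (Subgroup.closure S) ↔ ∀ g ∈ S, g z = z := by
  rw [mem_fixedField_iff]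
  exact ⟨fun h g hg ↦ h g (Subgroup.subset_closure hg),
    fun h g hg ↦ (Subgroup.closure_le (MulAction.stabilizer _ z)).2 h hg⟩

end FieldTheory

theorem div_eq_div_of_eq_neg {E : Type*} [DivisionRing E] {a b c d : E} (hac : a = -c)
    (hbd : b = -d) : a / b = c / d := by
  rw [hac, hbd, neg_div_neg_eq]

theorem finite_closure_image {G N : Type*} [Group G] [Finite G] [Group N] (f : G →* N)
    (s : Set G) : Finite (Subgroup.closure (f '' s)) := by
  rw [← MonoidHom.map_closure, ← SetLike.coe_sort_coe, Subgroup.coe_map]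
  exact ((Subgroup.closure s : Set G).toFinite.image f).to_subtype

section Klein

variable {K : Type} [Field K]

theorem algebraMap_eq_aeval_x4 (p : MvPolynomial (Fin 4) K) :
    algebraMap (MvPolynomial (Fin 4) K) (F4 K) p = aeval (x4 K) p := by
  rw [← IsScalarTower.toAlgHom_apply K, aeval_unique (IsScalarTower.toAlgHom K _ (F4 K))]
  rfl

theorem aeval_x4_ne_zero {p : MvPolynomial (Fin 4) K} (v : Fin 4 → K) (hp : eval v p ≠ 0) :
    aeval (x4 K) p ≠ 0 := by
  rw [← algebraMap_eq_aeval_x4]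
  exact (map_ne_zero_iff _ (IsFractionRing.injective _ _)).2 fun h ↦ hp (by simp [h])

theorem numS_ne_zero : x4 K 0 + x4 K 1 - x4 K 2 - x4 K 3 ≠ 0 := by
  simpa using (aeval_x4_ne_zero (p := X 0 + X 1 - X 2 - X 3) (K := K) ![1, 0, 0, 0] (by simp) :)

theorem numT_ne_zero : x4 K 0 - x4 K 1 - x4 K 2 + x4 K 3 ≠ 0 := by
  simpa using (aeval_x4_ne_zero (p := X 0 - X 1 - X 2 + X 3) (K := K) ![1, 0, 0, 0] (by simp) :)

theorem numU_ne_zero : x4 K 0 - x4 K 1 + x4 K 2 - x4 K 3 ≠ 0 := by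
  simpa using (aeval_x4_ne_zero (p := X 0 - X 1 + X 2 - X 3) (K := K) ![1, 0, 0, 0] (by simp) :)

theorem denS_ne_zero : x4 K 0 * x4 K 1 - x4 K 2 * x4 K 3 ≠ 0 := by
  simpa using (aeval_x4_ne_zero (p := X 0 * X 1 - X 2 * X 3) (K := K) ![1, 1, 0, 0] (by simp) :)

theorem denT_ne_zero : x4 K 0 * x4 K 3 - x4 K 1 * x4 K 2 ≠ 0 := by
  simpa using (aeval_x4_ne_zero (p := X 0 * X 3 - X 1 * X 2) (K := K) ![1, 0, 0, 1] (by simp) :)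

theorem denU_ne_zero : x4 K 0 * x4 K 2 - x4 K 1 * x4 K 3 ≠ 0 := by
  simpa using (aeval_x4_ne_zero (p := X 0 * X 2 - X 1 * X 3) (K := K) ![1, 0, 1, 0] (by simp) :)

theorem s1Q_ne_zero : s1Q K ≠ 0 := by
  simpa using (aeval_x4_ne_zero (p := X 0 + X 1 + X 2 + X 3) (K := K) ![1, 0, 0, 0] (by simp) :)

theorem x4_zero_add_x4_one_ne_zero : x4 K 0 + x4 K 1 ≠ 0 := by
  simpa using (aeval_x4_ne_zero (p := X 0 + X 1) (K := K) ![1, 0, 0, 0] (by simp) :)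

theorem adjoin_range_x4 : adjoin K (Set.range (x4 K)) = ⊤ := by
  refine eq_top_iff.2 fun z _ ↦ ?_
  obtain ⟨p, q, -, rfl⟩ := IsFractionRing.div_surjective (A := MvPolynomial (Fin 4) K) z
  have hmem (r : MvPolynomial (Fin 4) K) :
      algebraMap _ (F4 K) r ∈ adjoin K (Set.range (x4 K)) := by
    rw [algebraMap_eq_aeval_x4]
    exact algebra_adjoin_le_adjoin K _ ((aeval_range (x4 K)).le ⟨r, rfl⟩)
  exact div_mem (hmem p) (hmem q)

theorem eq_top_of_x4_mem {L : IntermediateField K (F4 K)} {E : IntermediateField L (F4 K)}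
    (h₀ : x4 K 0 ∈ E) (h₁ : x4 K 1 ∈ E) (h₂ : x4 K 2 ∈ E) (h₃ : x4 K 3 ∈ E) : E = ⊤ := by
  apply restrictScalars_injective K
  rw [restrictScalars_top, eq_top_iff, ← adjoin_range_x4, adjoin_le_iff]
  rintro _ ⟨i, rfl⟩
  fin_cases i
  exacts [h₀, h₁, h₂, h₃]

theorem eq_top_of_numerators_mem {L : IntermediateField K (F4 K)}
    {E : IntermediateField L (F4 K)} (h2 : (2 : F4 K) ≠ 0) (hs₁ : s1Q K ∈ E)
    (ha : x4 K 0 + x4 K 1 - x4 K 2 - x4 K 3 ∈ E)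
    (hb : x4 K 0 - x4 K 1 + x4 K 2 - x4 K 3 ∈ E) (hc : x4 K 0 - x4 K 1 - x4 K 2 + x4 K 3 ∈ E) :
    E = ⊤ := by
  have h4 : (4 : F4 K) ≠ 0 := by
    rw [show (4 : F4 K) = 2 * 2 by norm_num]
    exact mul_ne_zero h2 h2
  apply eq_top_of_x4_mem
  · convert div_mem (add_mem (add_mem (add_mem hs₁ ha) hb) hc) (ofNat_mem E 4) using 1
    field_simp; ring
  · convert div_mem (sub_mem (sub_mem (add_mem hs₁ ha) hb) hc) (ofNat_mem E 4) using 1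
    field_simp; ring
  · convert div_mem (sub_mem (add_mem (sub_mem hs₁ ha) hb) hc) (ofNat_mem E 4) using 1
    field_simp; ring
  · convert div_mem (add_mem (sub_mem (sub_mem hs₁ ha) hb) hc) (ofNat_mem E 4) using 1
    field_simp; ring

theorem s1Q_sub_four_div_sQ : s1Q K - 4 / sQ K = (x4 K 0 - x4 K 1 + x4 K 2 - x4 K 3) *
    (x4 K 0 - x4 K 1 - x4 K 2 + x4 K 3) / (x4 K 0 + x4 K 1 - x4 K 2 - x4 K 3) := by
  have := numS_ne_zero (K := K)
  have := denS_ne_zero (K := K)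
  field_simp
  ring

theorem s1Q_sub_four_div_tQ : s1Q K - 4 / tQ K = (x4 K 0 + x4 K 1 - x4 K 2 - x4 K 3) *
    (x4 K 0 - x4 K 1 + x4 K 2 - x4 K 3) / (x4 K 0 - x4 K 1 - x4 K 2 + x4 K 3) := by
  have := numT_ne_zero (K := K)
  have := denT_ne_zero (K := K)
  field_simp
  ring

theorem s1Q_sub_four_div_uQ : s1Q K - 4 / uQ K = (x4 K 0 - x4 K 1 - x4 K 2 + x4 K 3) *
    (x4 K 0 + x4 K 1 - x4 K 2 - x4 K 3) / (x4 K 0 - x4 K 1 + x4 K 2 - x4 K 3) := by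
  have := numU_ne_zero (K := K)
  have := denU_ne_zero (K := K)
  field_simp
  ring

theorem finiteDimensional_and_finrank_le_four_of_two_ne_zero (h2 : (2 : F4 K) ≠ 0) :
    FiniteDimensional (adjoin K {s1Q K, sQ K, tQ K, uQ K}) (F4 K) ∧
      finrank (adjoin K {s1Q K, sQ K, tQ K, uQ K}) (F4 K) ≤ 4 := by
  set L := adjoin K {s1Q K, sQ K, tQ K, uQ K}
  have hs1L : s1Q K ∈ L := subset_adjoin K _ (by simp)
  have hres {z} (hz : z ∈ L) : s1Q K - 4 / z ∈ L := sub_mem hs1L (div_mem (ofNat_mem _ 4) hz)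
  have hα := hres (subset_adjoin K _ (by simp) : sQ K ∈ L)
  have hβ := hres (subset_adjoin K _ (by simp) : uQ K ∈ L)
  have hγ := hres (subset_adjoin K _ (by simp) : tQ K ∈ L)
  rw [s1Q_sub_four_div_sQ] at hα
  rw [s1Q_sub_four_div_uQ] at hβ
  rw [s1Q_sub_four_div_tQ] at hγ
  have ha := numS_ne_zero (K := K)
  have hb := numU_ne_zero (K := K)
  have hc := numT_ne_zero (K := K)
  set a := x4 K 0 + x4 K 1 - x4 K 2 - x4 K 3
  set b := x4 K 0 - x4 K 1 + x4 K 2 - x4 K 3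
  set c := x4 K 0 - x4 K 1 - x4 K 2 + x4 K 3
  have htop : L⟮a, b⟯ = ⊤ := by
    have hL (z) (hz : z ∈ L) : z ∈ L⟮a, b⟯ := (L⟮a, b⟯).algebraMap_mem ⟨z, hz⟩
    have haE : a ∈ L⟮a, b⟯ := subset_adjoin _ _ (by simp)
    have hbE : b ∈ L⟮a, b⟯ := subset_adjoin _ _ (by simp)
    have hcE : c ∈ L⟮a, b⟯ := by
      rw [show c = b * c / a * (c * a / b) * (a * b / c) / (a * b) by field_simp]
      exact div_mem (mul_mem (mul_mem (hL _ hα) (hL _ hβ)) (hL _ hγ)) (mul_mem haE hbE)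
    exact eq_top_of_numerators_mem h2 (hL _ hs1L) haE hbE hcE
  refine finrank_le_four_of_quadratic_tower L (zero_mem _) (neg_mem (mul_mem hβ hγ)) ?_
    (zero_mem _) ((L⟮a⟯).algebraMap_mem ⟨_, neg_mem (mul_mem hα hγ)⟩) ?_ htop
  · field_simp
    ring
  · simp only [IntermediateField.algebraMap_apply]
    field_simp
    ring

theorem eq_top_of_denominators_mem {L : IntermediateField K (F4 K)}
    {E : IntermediateField L (F4 K)} (h2 : (2 : F4 K) = 0) (hx₀ : x4 K 0 ∈ E) (hx₁ : x4 K 1 ∈ E)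
    (hdT : x4 K 0 * x4 K 3 - x4 K 1 * x4 K 2 ∈ E) (hdU : x4 K 0 * x4 K 2 - x4 K 1 * x4 K 3 ∈ E) :
    E = ⊤ := by
  have hy := x4_zero_add_x4_one_ne_zero (K := K)
  have hyE := add_mem hx₀ hx₁
  refine eq_top_of_x4_mem hx₀ hx₁ ?_ ?_
  · convert div_mem (sub_mem (mul_mem hx₀ hdU) (mul_mem hx₁ hdT)) (pow_mem hyE 2) using 1
    field_simp
    linear_combination (x4 K 0 * x4 K 1 * x4 K 2 + x4 K 0 * x4 K 1 * x4 K 3) * h2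
  · convert div_mem (sub_mem (mul_mem hx₀ hdT) (mul_mem hx₁ hdU)) (pow_mem hyE 2) using 1
    field_simp
    linear_combination (x4 K 0 * x4 K 1 * x4 K 2 + x4 K 0 * x4 K 1 * x4 K 3) * h2

theorem s1Q_div_eq_denominators_of_two_eq_zero (h2 : (2 : F4 K) = 0) :
    s1Q K / sQ K = x4 K 0 * x4 K 1 - x4 K 2 * x4 K 3 ∧
      s1Q K / tQ K = x4 K 0 * x4 K 3 - x4 K 1 * x4 K 2 ∧
      s1Q K / uQ K = x4 K 0 * x4 K 2 - x4 K 1 * x4 K 3 := by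
  have := numS_ne_zero (K := K)
  have := numT_ne_zero (K := K)
  have := numU_ne_zero (K := K)
  have := denS_ne_zero (K := K)
  have := denT_ne_zero (K := K)
  have := denU_ne_zero (K := K)
  refine ⟨?_, ?_, ?_⟩ <;> field_simp
  · linear_combination (x4 K 2 + x4 K 3) * h2
  · linear_combination (x4 K 1 + x4 K 2) * h2
  · linear_combination (x4 K 1 + x4 K 3) * h2

theorem finiteDimensional_and_finrank_le_four_of_two_eq_zero (h2 : (2 : F4 K) = 0) :
    FiniteDimensional (adjoin K {s1Q K, sQ K, tQ K, uQ K}) (F4 K) ∧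
      finrank (adjoin K {s1Q K, sQ K, tQ K, uQ K}) (F4 K) ≤ 4 := by
  set L := adjoin K {s1Q K, sQ K, tQ K, uQ K}
  have hgen (z) (hz : z ∈ ({s1Q K, sQ K, tQ K, uQ K} : Set (F4 K))) : z ∈ L := subset_adjoin K _ hz
  have hs1L : s1Q K ∈ L := hgen _ (by simp)
  obtain ⟨hS, hT, hU⟩ := s1Q_div_eq_denominators_of_two_eq_zero h2
  have hdS : x4 K 0 * x4 K 1 - x4 K 2 * x4 K 3 ∈ L := hS ▸ div_mem hs1L (hgen _ (by simp))
  have hdT : x4 K 0 * x4 K 3 - x4 K 1 * x4 K 2 ∈ L := hT ▸ div_mem hs1L (hgen _ (by simp))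
  have hdU : x4 K 0 * x4 K 2 - x4 K 1 * x4 K 3 ∈ L := hU ▸ div_mem hs1L (hgen _ (by simp))
  have hs1 := s1Q_ne_zero (K := K)
  set y := x4 K 0 + x4 K 1
  set dS := x4 K 0 * x4 K 1 - x4 K 2 * x4 K 3
  set dT := x4 K 0 * x4 K 3 - x4 K 1 * x4 K 2
  set dU := x4 K 0 * x4 K 2 - x4 K 1 * x4 K 3
  have hyM : y ∈ L⟮y⟯ := mem_adjoin_simple_self L y
  have hLM (z) (hz : z ∈ L) : z ∈ L⟮y⟯ := (L⟮y⟯).algebraMap_mem ⟨z, hz⟩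
  have hL (z) (hz : z ∈ L) : z ∈ L⟮y, x4 K 0⟯ := (L⟮y, x4 K 0⟯).algebraMap_mem ⟨z, hz⟩
  have hx₀ : x4 K 0 ∈ L⟮y, x4 K 0⟯ := subset_adjoin _ _ (by simp)
  have hx₁ : x4 K 1 ∈ L⟮y, x4 K 0⟯ := by
    convert sub_mem (subset_adjoin _ _ (by simp) : y ∈ L⟮y, x4 K 0⟯) hx₀ using 1
    ring
  -- `q₂` is `x4 K 0 * x4 K 1`, written over `L⟮y⟯`
  refine finrank_le_four_of_quadratic_tower L (z₂ := x4 K 0) (neg_mem hs1L) (add_mem hdT hdU) ?_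
    (neg_mem hyM) (q₂ := dS / s1Q K * y + (dT * dU - dS * (dT + dU)) / s1Q K ^ 2)
    (add_mem (mul_mem (hLM _ (div_mem hdS hs1L)) hyM) (hLM _ (div_mem
      (sub_mem (mul_mem hdT hdU) (mul_mem hdS (add_mem hdT hdU))) (pow_mem hs1L 2)))) ?_
    (eq_top_of_denominators_mem h2 hx₀ hx₁ (hL _ hdT) (hL _ hdU))
  · linear_combination (-(x4 K 1 * x4 K 2 + x4 K 1 * x4 K 3)) * h2
  · field_simp
    linear_combination
      (-(x4 K 1 * (x4 K 0 + x4 K 2) * (x4 K 0 + x4 K 3) * (x4 K 2 + x4 K 3))) * h2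

theorem finiteDimensional_and_finrank_le_four :
    FiniteDimensional (adjoin K {s1Q K, sQ K, tQ K, uQ K}) (F4 K) ∧
      finrank (adjoin K {s1Q K, sQ K, tQ K, uQ K}) (F4 K) ≤ 4 := by
  rcases eq_or_ne (2 : F4 K) 0 with h2 | h2
  exacts [finiteDimensional_and_finrank_le_four_of_two_eq_zero h2,
    finiteDimensional_and_finrank_le_four_of_two_ne_zero h2]

theorem apply_invariant_eq_self {σ : Equiv.Perm (Fin 4)}
    (hσ : σ ∈ ({Equiv.swap 0 1 * Equiv.swap 2 3, Equiv.swap 0 2 * Equiv.swap 1 3} : Set _))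
    {g : F4 K ≃ₐ[K] F4 K} (hg : ∀ i, g (x4 K i) = x4 K (σ i)) :
    ∀ z ∈ ({s1Q K, sQ K, tQ K, uQ K} : Set (F4 K)), g z = z := by
  -- each generator either fixes or negates both the numerator and the denominator of S, T, U
  rcases hσ with rfl | rfl <;> rintro z (rfl | rfl | rfl | rfl) <;>
    simp only [s1Q, sQ, tQ, uQ, map_add, map_sub, map_mul, map_div₀, hg] <;>
    simp only [Equiv.Perm.mul_apply, Fin.isValue, Equiv.swap_apply_left, Equiv.swap_apply_right,
      ne_eq, Fin.reduceEq, not_false_eq_true, Equiv.swap_apply_of_ne_of_ne] <;>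
    first | ring1 | exact div_eq_div_of_eq_neg (by ring) (by ring)

theorem four_le_card_of_mem (φ : Equiv.Perm (Fin 4) →* (F4 K ≃ₐ[K] F4 K))
    (hφ : ∀ σ : Equiv.Perm (Fin 4), ∀ i, φ σ (x4 K i) = x4 K (σ i))
    {H : Subgroup (F4 K ≃ₐ[K] F4 K)} [Finite H] (h₁ : φ (Equiv.swap 0 1 * Equiv.swap 2 3) ∈ H)
    (h₂ : φ (Equiv.swap 0 2 * Equiv.swap 1 3) ∈ H) : 4 ≤ Nat.card H := by
  let ι : Fin 4 → H := ![1, ⟨_, h₁⟩, ⟨_, h₂⟩, ⟨_, h₁⟩ * ⟨_, h₂⟩]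
  have hι (i) : (ι i : F4 K ≃ₐ[K] F4 K) (x4 K 0) = x4 K i := by
    fin_cases i <;> simp [ι, hφ, Equiv.swap_apply_of_ne_of_ne]
  have hinj : Function.Injective ι := fun i j hij ↦ by
    simpa [hι] using congrArg (fun g : H ↦ (g : F4 K ≃ₐ[K] F4 K) (x4 K 0)) hij
  simpa using Nat.card_le_card_of_injective ι hinj

end Klein

/-- the fixed field of the Klein four-group V₄ = ⟨(12)(34),(13)(24)⟩
acting by permuting the variables is K(s₁, S, T, U); in particular it is purely
transcendental over K. -/
theorem stmt_8 (K : Type) [Field K]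
    (φ : Equiv.Perm (Fin 4) →* (F4 K ≃ₐ[K] F4 K))
    (hφ : ∀ σ : Equiv.Perm (Fin 4), ∀ i, φ σ (x4 K i) = x4 K (σ i)) :
    fixedField (Subgroup.closure
        {φ (Equiv.swap 0 1 * Equiv.swap 2 3), φ (Equiv.swap 0 2 * Equiv.swap 1 3)}) =
      adjoin K {s1Q K, sQ K, tQ K, uQ K} := by
  have : Finite (Subgroup.closure
      {φ (Equiv.swap 0 1 * Equiv.swap 2 3), φ (Equiv.swap 0 2 * Equiv.swap 1 3)}) := by
    rw [← Set.image_pair]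
    exact finite_closure_image φ _
  set H := Subgroup.closure
    {φ (Equiv.swap 0 1 * Equiv.swap 2 3), φ (Equiv.swap 0 2 * Equiv.swap 1 3)}
  have hLH : adjoin K {s1Q K, sQ K, tQ K, uQ K} ≤ fixedField H :=
    adjoin_le_iff.2 fun z hz ↦ mem_fixedField_closure_iff.2 <| by
      rintro g (rfl | rfl) <;> exact apply_invariant_eq_self (by simp) (hφ _) z hz
  have := Fintype.ofFinite H
  obtain ⟨_, hL⟩ := finiteDimensional_and_finrank_le_four (K := K)
  refine (eq_of_le_of_finrank_le' hLH ?_).symm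
  calc finrank (adjoin K {s1Q K, sQ K, tQ K, uQ K}) (F4 K) ≤ 4 := hL
    _ ≤ Nat.card H := four_le_card_of_mem φ hφ (Subgroup.subset_closure (by simp))
      (Subgroup.subset_closure (by simp))
    _ = finrank (fixedField H) (F4 K) := by
      rw [Nat.card_eq_fintype_card]
      exact (FixedPoints.finrank_eq_card H (F4 K)).symm
end

section
/- With s₁, s₄, S, T, U as above and u₁ = S+T+U, u₂ = ST+TU+SU, u₃ = STU, one has the identity s₄ = (u₁² − 4u₂ + u₃s₁)/u₃² in K(x₁,x₂,x₃,x₄), where s₄ = x₁x₂x₃x₄. -/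
/-!
Clearing the denominators of `S`, `T`, `U` turns the identity into a polynomial identity of
degree 10 in the `xᵢ`, valid in any field. In `K(x₁, …, x₄)` the six linear and quadratic forms
involved are nonzero, since each is a nonzero polynomial, as evaluation at a suitable point shows.
-/

open MvPolynomial

theorem mul_mul_mul_eq_of_eq_div {F : Type*} [Field F] {x₀ x₁ x₂ x₃ S T U : F}
    (hA : x₀ * x₁ - x₂ * x₃ ≠ 0) (hB : x₀ * x₃ - x₁ * x₂ ≠ 0) (hC : x₀ * x₂ - x₁ * x₃ ≠ 0)
    (hS : S = (x₀ + x₁ - x₂ - x₃) / (x₀ * x₁ - x₂ * x₃))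
    (hT : T = (x₀ - x₁ - x₂ + x₃) / (x₀ * x₃ - x₁ * x₂))
    (hU : U = (x₀ - x₁ + x₂ - x₃) / (x₀ * x₂ - x₁ * x₃)) (hSTU : S * T * U ≠ 0) :
    x₀ * x₁ * x₂ * x₃ =
      ((S + T + U) ^ 2 - 4 * (S * T + T * U + S * U) + S * T * U * (x₀ + x₁ + x₂ + x₃)) /
        (S * T * U) ^ 2 := by
  rw [eq_div_iff (pow_ne_zero 2 hSTU), hS, hT, hU]
  field_simp
  ring

theorem algebraMap_ne_zero_of_eval_ne_zero {σ R L : Type*} [CommRing R] [IsDomain R] [Field L]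
    [Algebra (MvPolynomial σ R) L] [IsFractionRing (MvPolynomial σ R) L]
    {p : MvPolynomial σ R} (v : σ → R) (h : eval v p ≠ 0) :
    algebraMap (MvPolynomial σ R) L p ≠ 0 :=
  (map_ne_zero_iff _ (IsFractionRing.injective _ _)).2 fun hp => h (by simp [hp])

/-- s₄ = (u₁² − 4u₂ + u₃s₁)/u₃². -/
theorem stmt_9 (K : Type) [Field K] :
    x4 K 0 * x4 K 1 * x4 K 2 * x4 K 3 =
      (u1Q K ^ 2 - 4 * u2Q K + u3Q K * s1Q K) / u3Q K ^ 2 := by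
  have ha : x4 K 0 + x4 K 1 - x4 K 2 - x4 K 3 ≠ 0 := by
    rw [← map_add, ← map_sub, ← map_sub]
    exact algebraMap_ne_zero_of_eval_ne_zero ![1, 0, 0, 0] (by simp)
  have hb : x4 K 0 - x4 K 1 - x4 K 2 + x4 K 3 ≠ 0 := by
    rw [← map_sub, ← map_sub, ← map_add]
    exact algebraMap_ne_zero_of_eval_ne_zero ![1, 0, 0, 0] (by simp)
  have hc : x4 K 0 - x4 K 1 + x4 K 2 - x4 K 3 ≠ 0 := by
    rw [← map_sub, ← map_add, ← map_sub]
    exact algebraMap_ne_zero_of_eval_ne_zero ![1, 0, 0, 0] (by simp)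
  have hA : x4 K 0 * x4 K 1 - x4 K 2 * x4 K 3 ≠ 0 := by
    rw [← map_mul, ← map_mul, ← map_sub]
    exact algebraMap_ne_zero_of_eval_ne_zero ![1, 1, 0, 0] (by simp)
  have hB : x4 K 0 * x4 K 3 - x4 K 1 * x4 K 2 ≠ 0 := by
    rw [← map_mul, ← map_mul, ← map_sub]
    exact algebraMap_ne_zero_of_eval_ne_zero ![1, 0, 0, 1] (by simp)
  have hC : x4 K 0 * x4 K 2 - x4 K 1 * x4 K 3 ≠ 0 := by
    rw [← map_mul, ← map_mul, ← map_sub]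
    exact algebraMap_ne_zero_of_eval_ne_zero ![1, 0, 1, 0] (by simp)
  have hSTU : u3Q K ≠ 0 :=
    mul_ne_zero (mul_ne_zero (div_ne_zero ha hA) (div_ne_zero hb hB)) (div_ne_zero hc hC)
  exact mul_mul_mul_eq_of_eq_div hA hB hC rfl rfl rfl hSTU
end
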